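/- Let P and Z be real symmetric n×n matrices such that R(P), R(P+Z), R_22(P+Z) and the Schur complement R#_22(P+Z) = R_11(P+Z) − R_12(P+Z) R_22(P+Z)^{-1} R_21(P+Z) are invertible. Suppose Z satisfies the inner Riccati equation at P. Then G(P+Z) = −(N_1(P,Z) − R_12(P+Z) R_22(P+Z)^{-1} N_2(P,Z))^T (R#_22(P+Z))^{-1} (N_1(P,Z) − R_12(P+Z) R_22(P+Z)^{-1} N_2(P,Z)). -/

import Mathlib

/-!
Write `K = K(P)`. With the gain `K` held fixed, the Riccati left-hand side `closedLoop K W` is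
affine in `W`, its increment from `P` to `P + Z` is the closed-loop Lyapunov term in `Z`, and
`closedLoop K P = G(P)`; so the inner Riccati equation reads `closedLoop K (P + Z) = N₂ᵀ R₂₂⁻¹ N₂`.
Completing the square at `P + Z`, where `S(P + Z) + R(P + Z) K = N(P, Z)`, gives
`G(P + Z) = N₂ᵀ R₂₂⁻¹ N₂ - Nᵀ R(P + Z)⁻¹ N`, and expanding `R(P + Z)⁻¹` through the Schur complement
of its block `R₂₂(P + Z)` cancels the `N₂` term.
-/

open Matrix BigOperators

noncomputable section

/-- Mean-square stability of the tuple `(F, G_1, …, G_r)` via the Lyapunov characterization. -/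
def MSStable {n r : ℕ} (F : Matrix (Fin n) (Fin n) ℝ)
    (G : Fin r → Matrix (Fin n) (Fin n) ℝ) : Prop :=
  ∃ X : Matrix (Fin n) (Fin n) ℝ, X.PosDef ∧
    (-(X * F + Fᵀ * X + ∑ l, (G l)ᵀ * X * G l)).PosDef

/-- Stochastic detectability of the system `[E_0, …, E_r; F, G_1, …, G_r]`. -/
def StochDetectable {n q r : ℕ} (E0 : Matrix (Fin q) (Fin n) ℝ)
    (E : Fin r → Matrix (Fin q) (Fin n) ℝ)
    (F : Matrix (Fin n) (Fin n) ℝ) (G : Fin r → Matrix (Fin n) (Fin n) ℝ) : Prop :=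
  ∃ Θ : Matrix (Fin n) (Fin q) ℝ, MSStable (F + Θ * E0) (fun l => G l + Θ * E l)

/-- The data of the zero-sum linear-quadratic stochastic differential game. -/
structure GameData (n m1 m2 r : ℕ) where
  A : Matrix (Fin n) (Fin n) ℝ
  C : Fin r → Matrix (Fin n) (Fin n) ℝ
  B1 : Matrix (Fin n) (Fin m1) ℝ
  B2 : Matrix (Fin n) (Fin m2) ℝ
  D1 : Fin r → Matrix (Fin n) (Fin m1) ℝ
  D2 : Fin r → Matrix (Fin n) (Fin m2) ℝ
  Q : Matrix (Fin n) (Fin n) ℝ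
  hQ : Q.IsSymm
  S1 : Matrix (Fin m1) (Fin n) ℝ
  S2 : Matrix (Fin m2) (Fin n) ℝ
  R11 : Matrix (Fin m1) (Fin m1) ℝ
  R22 : Matrix (Fin m2) (Fin m2) ℝ
  R12 : Matrix (Fin m1) (Fin m2) ℝ
  hR11 : R11.IsSymm
  hR22 : R22.IsSymm

namespace GameData

variable {n m1 m2 r : ℕ} (g : GameData n m1 m2 r)

/-- The stacked weighting matrix `S = [S_1; S_2]`. -/
def Sw : Matrix (Fin m1 ⊕ Fin m2) (Fin n) ℝ := fromRows g.S1 g.S2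

/-- The full weighting matrix `R = [[R_11, R_12],[R_21, R_22]]` with `R_21 = R_12ᵀ`. -/
def Rw : Matrix (Fin m1 ⊕ Fin m2) (Fin m1 ⊕ Fin m2) ℝ :=
  fromBlocks g.R11 g.R12 g.R12ᵀ g.R22

/-- `S_1(P) = B_1ᵀ P + Σ_l D_{l,1}ᵀ P C_l + S_1`. -/
def S1P (P : Matrix (Fin n) (Fin n) ℝ) : Matrix (Fin m1) (Fin n) ℝ :=
  g.B1ᵀ * P + ∑ l, (g.D1 l)ᵀ * P * g.C l + g.S1

/-- `S_2(P) = B_2ᵀ P + Σ_l D_{l,2}ᵀ P C_l + S_2`. -/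
def S2P (P : Matrix (Fin n) (Fin n) ℝ) : Matrix (Fin m2) (Fin n) ℝ :=
  g.B2ᵀ * P + ∑ l, (g.D2 l)ᵀ * P * g.C l + g.S2

/-- `S(P) = [S_1(P); S_2(P)]`. -/
def SP (P : Matrix (Fin n) (Fin n) ℝ) : Matrix (Fin m1 ⊕ Fin m2) (Fin n) ℝ :=
  fromRows (g.S1P P) (g.S2P P)

/-- `R_11(P)`. -/
def R11P (P : Matrix (Fin n) (Fin n) ℝ) : Matrix (Fin m1) (Fin m1) ℝ :=
  g.R11 + ∑ l, (g.D1 l)ᵀ * P * g.D1 l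

/-- `R_12(P)`. -/
def R12P (P : Matrix (Fin n) (Fin n) ℝ) : Matrix (Fin m1) (Fin m2) ℝ :=
  g.R12 + ∑ l, (g.D1 l)ᵀ * P * g.D2 l

/-- `R_21(P)`. -/
def R21P (P : Matrix (Fin n) (Fin n) ℝ) : Matrix (Fin m2) (Fin m1) ℝ :=
  g.R12ᵀ + ∑ l, (g.D2 l)ᵀ * P * g.D1 l

/-- `R_22(P)`. -/
def R22P (P : Matrix (Fin n) (Fin n) ℝ) : Matrix (Fin m2) (Fin m2) ℝ :=
  g.R22 + ∑ l, (g.D2 l)ᵀ * P * g.D2 l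

/-- `R(P)` assembled from its blocks. -/
def RP (P : Matrix (Fin n) (Fin n) ℝ) : Matrix (Fin m1 ⊕ Fin m2) (Fin m1 ⊕ Fin m2) ℝ :=
  fromBlocks (g.R11P P) (g.R12P P) (g.R21P P) (g.R22P P)

/-- `K(P) = −R(P)⁻¹ S(P)` (stacked feedback gain). -/
def KP (P : Matrix (Fin n) (Fin n) ℝ) : Matrix (Fin m1 ⊕ Fin m2) (Fin n) ℝ :=
  -((g.RP P)⁻¹ * g.SP P)

/-- `K_1(P)`: the first block of `K(P)`. -/
def K1 (P : Matrix (Fin n) (Fin n) ℝ) : Matrix (Fin m1) (Fin n) ℝ :=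
  (g.KP P).submatrix Sum.inl id

/-- `K_2(P)`: the second block of `K(P)`. -/
def K2 (P : Matrix (Fin n) (Fin n) ℝ) : Matrix (Fin m2) (Fin n) ℝ :=
  (g.KP P).submatrix Sum.inr id

/-- `G(P) = PA + AᵀP + Σ_l C_lᵀ P C_l + Q − S(P)ᵀ R(P)⁻¹ S(P)`. -/
def GP (P : Matrix (Fin n) (Fin n) ℝ) : Matrix (Fin n) (Fin n) ℝ :=
  P * g.A + g.Aᵀ * P + ∑ l, (g.C l)ᵀ * P * g.C l + g.Q
    - (g.SP P)ᵀ * (g.RP P)⁻¹ * g.SP P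

/-- `A_{K(P)} = A + B_1 K_1(P) + B_2 K_2(P)`. -/
def AK (P : Matrix (Fin n) (Fin n) ℝ) : Matrix (Fin n) (Fin n) ℝ :=
  g.A + g.B1 * g.K1 P + g.B2 * g.K2 P

/-- `C_{l,K(P)} = C_l + D_{l,1} K_1(P) + D_{l,2} K_2(P)`. -/
def CK (P : Matrix (Fin n) (Fin n) ℝ) (l : Fin r) : Matrix (Fin n) (Fin n) ℝ :=
  g.C l + g.D1 l * g.K1 P + g.D2 l * g.K2 P

/-- `N_1(P,Z)`. -/
def N1 (P Z : Matrix (Fin n) (Fin n) ℝ) : Matrix (Fin m1) (Fin n) ℝ :=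
  g.B1ᵀ * Z + ∑ l, (g.D1 l)ᵀ * Z * g.CK P l

/-- `N_2(P,Z)`. -/
def N2 (P Z : Matrix (Fin n) (Fin n) ℝ) : Matrix (Fin m2) (Fin n) ℝ :=
  g.B2ᵀ * Z + ∑ l, (g.D2 l)ᵀ * Z * g.CK P l

/-- `N(P,Z) = [N_1(P,Z); N_2(P,Z)]`. -/
def NP (P Z : Matrix (Fin n) (Fin n) ℝ) : Matrix (Fin m1 ⊕ Fin m2) (Fin n) ℝ :=
  fromRows (g.N1 P Z) (g.N2 P Z)

/-- Membership in `Dom G`: `R_22(P) ≻ 0` and `R_11(P) ≺ 0`. -/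
def MemDomG (P : Matrix (Fin n) (Fin n) ℝ) : Prop :=
  (g.R22P P).PosDef ∧ (-(g.R11P P)).PosDef

/-- `Z` satisfies the inner Riccati equation at `P`. -/
def InnerRiccati (P Z : Matrix (Fin n) (Fin n) ℝ) : Prop :=
  g.GP P + Z * g.AK P + (g.AK P)ᵀ * Z + ∑ l, (g.CK P l)ᵀ * Z * g.CK P l
    - (g.N2 P Z)ᵀ * (g.R22P (P + Z))⁻¹ * g.N2 P Z = 0

/-- `A_L = A + B_1 K_1(0) + B_2 K_2(0) + B_2 L`. -/
def AL (L : Matrix (Fin m2) (Fin n) ℝ) : Matrix (Fin n) (Fin n) ℝ :=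
  g.A + g.B1 * g.K1 0 + g.B2 * g.K2 0 + g.B2 * L

/-- `C_{lL} = C_l + D_{l,1} K_1(0) + D_{l,2} K_2(0) + D_{l,2} L`. -/
def CL (L : Matrix (Fin m2) (Fin n) ℝ) (l : Fin r) : Matrix (Fin n) (Fin n) ℝ :=
  g.C l + g.D1 l * g.K1 0 + g.D2 l * g.K2 0 + g.D2 l * L

/-- `Q_L = Q − S(0)ᵀ R(0)⁻¹ S(0) + Lᵀ R_22 L`. -/
def QL (L : Matrix (Fin m2) (Fin n) ℝ) : Matrix (Fin n) (Fin n) ℝ :=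
  g.Q - (g.SP 0)ᵀ * (g.RP 0)⁻¹ * g.SP 0 + Lᵀ * g.R22 * L

/-- `S_L = R_12 L`. -/
def SL (L : Matrix (Fin m2) (Fin n) ℝ) : Matrix (Fin m1) (Fin n) ℝ := g.R12 * L

/-- The linear term `B_1ᵀ P + Σ_l D_{l,1}ᵀ P C_{lL} + S_L` in the `L`-Riccati equation. -/
def S1L (L : Matrix (Fin m2) (Fin n) ℝ) (P : Matrix (Fin n) (Fin n) ℝ) :
    Matrix (Fin m1) (Fin n) ℝ :=
  g.B1ᵀ * P + ∑ l, (g.D1 l)ᵀ * P * g.CL L l + g.SL L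

/-- Left-hand side of the algebraic Riccati equation associated with `L`. -/
def AREL (L : Matrix (Fin m2) (Fin n) ℝ) (P : Matrix (Fin n) (Fin n) ℝ) :
    Matrix (Fin n) (Fin n) ℝ :=
  P * g.AL L + (g.AL L)ᵀ * P + ∑ l, (g.CL L l)ᵀ * P * g.CL L l + g.QL L
    - (g.S1L L P)ᵀ * (g.R11P P)⁻¹ * g.S1L L P

/-- `K_L(P) = −(R_11 + Σ_l D_{l,1}ᵀ P D_{l,1})⁻¹ (B_1ᵀ P + Σ_l D_{l,1}ᵀ P C_{lL} + S_L)`. -/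
def KL (L : Matrix (Fin m2) (Fin n) ℝ) (P : Matrix (Fin n) (Fin n) ℝ) :
    Matrix (Fin m1) (Fin n) ℝ :=
  -((g.R11P P)⁻¹ * g.S1L L P)

/-- `P̃` is a stabilizing solution of the `L`-Riccati equation. -/
def IsStabSolL (L : Matrix (Fin m2) (Fin n) ℝ) (P : Matrix (Fin n) (Fin n) ℝ) : Prop :=
  P.IsSymm ∧ g.AREL L P = 0 ∧ (-(g.R11P P)).PosDef ∧
    MSStable (g.AL L + g.B1 * g.KL L P) (fun l => g.CL L l + g.D1 l * g.KL L P)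

/-- `L ∈ 𝒜`. -/
def MemA (L : Matrix (Fin m2) (Fin n) ℝ) : Prop :=
  MSStable (g.AL L) (g.CL L) ∧ ∃ P, g.IsStabSolL L P

end GameData

namespace Matrix

variable {α : Type*}

theorem fromRows_add [Add α] {m₁ m₂ n : Type*} (A₁ B₁ : Matrix m₁ n α) (A₂ B₂ : Matrix m₂ n α) :
    fromRows A₁ A₂ + fromRows B₁ B₂ = fromRows (A₁ + B₁) (A₂ + B₂) := by
  ext (i | i) j <;> rfl

theorem fromRows_sum [AddCommMonoid α] {m₁ m₂ n ι : Type*} (s : Finset ι)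
    (A₁ : ι → Matrix m₁ n α) (A₂ : ι → Matrix m₂ n α) :
    ∑ i ∈ s, fromRows (A₁ i) (A₂ i) = fromRows (∑ i ∈ s, A₁ i) (∑ i ∈ s, A₂ i) := by
  ext (i | i) j <;> simp [sum_apply]

theorem fromBlocks_sum [AddCommMonoid α] {m₁ m₂ n₁ n₂ ι : Type*} (s : Finset ι)
    (A : ι → Matrix m₁ n₁ α) (B : ι → Matrix m₁ n₂ α) (C : ι → Matrix m₂ n₁ α)
    (D : ι → Matrix m₂ n₂ α) :
    ∑ i ∈ s, fromBlocks (A i) (B i) (C i) (D i)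
      = fromBlocks (∑ i ∈ s, A i) (∑ i ∈ s, B i) (∑ i ∈ s, C i) (∑ i ∈ s, D i) := by
  ext (i | i) (j | j) <;> simp [sum_apply]

variable [CommRing α] {m n p q : Type*} [Fintype m]

theorem transpose_sum_transpose_mul_mul {ι : Type*} {W : Matrix m m α} (hW : Wᵀ = W)
    (s : Finset ι) (X : ι → Matrix m p α) (Y : ι → Matrix m q α) :
    (∑ l ∈ s, (X l)ᵀ * W * Y l)ᵀ = ∑ l ∈ s, (Y l)ᵀ * W * X l := by
  simp only [transpose_sum, transpose_mul, transpose_transpose, hW, Matrix.mul_assoc]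

variable [DecidableEq m]

theorem transpose_add_mul_mul_inv_mul_add {R : Matrix m m α} (hR : IsUnit R.det)
    (hRt : Rᵀ = R) (S K : Matrix m n α) :
    (S + R * K)ᵀ * R⁻¹ * (S + R * K) = Sᵀ * R⁻¹ * S + Sᵀ * K + Kᵀ * S + Kᵀ * R * K := by
  have hRinv : R⁻¹ * R = 1 := nonsing_inv_mul R hR
  have hRinv' : R * R⁻¹ = 1 := mul_nonsing_inv R hR
  simp only [transpose_add, transpose_mul, hRt, Matrix.add_mul, Matrix.mul_add, Matrix.mul_assoc]
  simp only [← Matrix.mul_assoc R⁻¹ R, ← Matrix.mul_assoc R R⁻¹, hRinv, hRinv', Matrix.one_mul]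
  abel

variable [Fintype n] [DecidableEq n]

theorem isUnit_det_fromBlocks₂₂ {A : Matrix m m α} {B : Matrix m n α} {C : Matrix n m α}
    {D : Matrix n n α} (hD : IsUnit D.det) (hS : IsUnit (A - B * D⁻¹ * C).det) :
    IsUnit (fromBlocks A B C D).det := by
  let := D.invertibleOfIsUnitDet hD
  rw [det_fromBlocks₂₂, invOf_eq_nonsing_inv]
  exact hD.mul hS

theorem inv_fromBlocks₂₂_of_isUnit_det {A : Matrix m m α} {B : Matrix m n α}
    {C : Matrix n m α} {D : Matrix n n α} (hD : IsUnit D.det)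
    (hS : IsUnit (A - B * D⁻¹ * C).det) :
    (fromBlocks A B C D)⁻¹ =
      fromBlocks (A - B * D⁻¹ * C)⁻¹ (-((A - B * D⁻¹ * C)⁻¹ * B * D⁻¹))
        (-(D⁻¹ * C * (A - B * D⁻¹ * C)⁻¹))
        (D⁻¹ + D⁻¹ * C * (A - B * D⁻¹ * C)⁻¹ * B * D⁻¹) := by
  let := D.invertibleOfIsUnitDet hD
  let : Invertible (A - B * ⅟D * C) := by
    rw [invOf_eq_nonsing_inv]; exact (A - B * D⁻¹ * C).invertibleOfIsUnitDet hS
  let := fromBlocks₂₂Invertible A B C D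
  rw [← invOf_eq_nonsing_inv, invOf_fromBlocks₂₂_eq]
  simp only [invOf_eq_nonsing_inv]

theorem fromCols_mul_fromBlocks_inv_mul_fromRows {A : Matrix m m α} {B : Matrix m n α}
    {C : Matrix n m α} {D : Matrix n n α} (hD : IsUnit D.det)
    (hS : IsUnit (A - B * D⁻¹ * C).det) (L₁ : Matrix p m α) (L₂ : Matrix p n α)
    (N₁ : Matrix m q α) (N₂ : Matrix n q α) :
    fromCols L₁ L₂ * (fromBlocks A B C D)⁻¹ * fromRows N₁ N₂ =
      (L₁ - L₂ * D⁻¹ * C) * (A - B * D⁻¹ * C)⁻¹ * (N₁ - B * D⁻¹ * N₂) + L₂ * D⁻¹ * N₂ := by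
  rw [inv_fromBlocks₂₂_of_isUnit_det hD hS, fromCols_mul_fromBlocks, fromCols_mul_fromRows]
  simp only [sub_eq_add_neg, Matrix.neg_mul, Matrix.mul_neg, Matrix.add_mul, Matrix.mul_add,
    Matrix.mul_assoc]
  abel

end Matrix

namespace GameData

variable {n m1 m2 r : ℕ} (g : GameData n m1 m2 r)

-- The stacked inputs `B = [B₁ B₂]`, `D_l = [D_{l,1} D_{l,2}]` turn the two players into one.
def Bw : Matrix (Fin n) (Fin m1 ⊕ Fin m2) ℝ := fromCols g.B1 g.B2

def Dw (l : Fin r) : Matrix (Fin n) (Fin m1 ⊕ Fin m2) ℝ := fromCols (g.D1 l) (g.D2 l)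

theorem KP_eq_fromRows (P : Matrix (Fin n) (Fin n) ℝ) :
    g.KP P = fromRows (g.K1 P) (g.K2 P) := by
  ext (i | i) j <;> rfl

theorem SP_eq (P : Matrix (Fin n) (Fin n) ℝ) :
    g.SP P = g.Bwᵀ * P + ∑ l, (g.Dw l)ᵀ * P * g.C l + g.Sw := by
  simp only [SP, S1P, S2P, Bw, Dw, Sw, transpose_fromCols, fromRows_mul, fromRows_sum,
    fromRows_add]

theorem RP_eq (P : Matrix (Fin n) (Fin n) ℝ) :
    g.RP P = g.Rw + ∑ l, (g.Dw l)ᵀ * P * g.Dw l := by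
  simp only [RP, R11P, R12P, R21P, R22P, Rw, Dw, transpose_fromCols, Matrix.mul_assoc,
    mul_fromCols, fromRows_mul, fromCols_fromRows_eq_fromBlocks, fromBlocks_sum, fromBlocks_add]

theorem AK_eq (P : Matrix (Fin n) (Fin n) ℝ) : g.AK P = g.A + g.Bw * g.KP P := by
  rw [AK, Bw, KP_eq_fromRows, fromCols_mul_fromRows, add_assoc]

theorem CK_eq (P : Matrix (Fin n) (Fin n) ℝ) (l : Fin r) :
    g.CK P l = g.C l + g.Dw l * g.KP P := by
  rw [CK, Dw, KP_eq_fromRows, fromCols_mul_fromRows, add_assoc]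

theorem NP_eq (P Z : Matrix (Fin n) (Fin n) ℝ) :
    g.NP P Z = g.Bwᵀ * Z + ∑ l, (g.Dw l)ᵀ * Z * g.CK P l := by
  simp only [NP, N1, N2, Bw, Dw, transpose_fromCols, fromRows_mul, fromRows_sum, fromRows_add]

section Symmetric

variable {W : Matrix (Fin n) (Fin n) ℝ}

theorem transpose_RP (hW : Wᵀ = W) : (g.RP W)ᵀ = g.RP W := by
  rw [RP_eq, transpose_add, transpose_sum_transpose_mul_mul hW, Rw, fromBlocks_transpose,
    transpose_transpose, g.hR11.eq, g.hR22.eq]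

theorem transpose_R22P (hW : Wᵀ = W) : (g.R22P W)ᵀ = g.R22P W := by
  rw [R22P, transpose_add, transpose_sum_transpose_mul_mul hW, g.hR22.eq]

theorem R21P_eq_transpose (hW : Wᵀ = W) : g.R21P W = (g.R12P W)ᵀ := by
  rw [R21P, R12P, transpose_add, transpose_sum_transpose_mul_mul hW]

end Symmetric

/-- The left-hand side of the Riccati equation at `W` with the feedback `u = K x` held fixed;
`G(W)` is its value at the stationary gain `K(W)`. -/
def closedLoop (K : Matrix (Fin m1 ⊕ Fin m2) (Fin n) ℝ) (W : Matrix (Fin n) (Fin n) ℝ) :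
    Matrix (Fin n) (Fin n) ℝ :=
  W * g.A + g.Aᵀ * W + ∑ l, (g.C l)ᵀ * W * g.C l + g.Q
    + (g.SP W)ᵀ * K + Kᵀ * g.SP W + Kᵀ * g.RP W * K

theorem closedLoop_add (K : Matrix (Fin m1 ⊕ Fin m2) (Fin n) ℝ) (W Z : Matrix (Fin n) (Fin n) ℝ)
    (hZ : Zᵀ = Z) :
    g.closedLoop K (W + Z) = g.closedLoop K W + Z * (g.A + g.Bw * K) + (g.A + g.Bw * K)ᵀ * Z
      + ∑ l, (g.C l + g.Dw l * K)ᵀ * Z * (g.C l + g.Dw l * K) := by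
  simp only [closedLoop, SP_eq, RP_eq, transpose_add, transpose_mul, transpose_sum,
    transpose_transpose, hZ, Matrix.mul_add, Matrix.add_mul, Finset.sum_add_distrib,
    Matrix.sum_mul, Matrix.mul_sum, Matrix.mul_assoc]
  abel

theorem GP_eq_closedLoop_sub {W : Matrix (Fin n) (Fin n) ℝ} (hW : Wᵀ = W)
    (hR : IsUnit (g.RP W).det) (K : Matrix (Fin m1 ⊕ Fin m2) (Fin n) ℝ) :
    g.GP W = g.closedLoop K W - (g.SP W + g.RP W * K)ᵀ * (g.RP W)⁻¹ * (g.SP W + g.RP W * K) := by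
  rw [transpose_add_mul_mul_inv_mul_add hR (g.transpose_RP hW), GP, closedLoop]
  abel

theorem SP_add_RP_mul_KP {P : Matrix (Fin n) (Fin n) ℝ} (hR : IsUnit (g.RP P).det) :
    g.SP P + g.RP P * g.KP P = 0 := by
  rw [KP, Matrix.mul_neg, ← Matrix.mul_assoc, mul_nonsing_inv _ hR, Matrix.one_mul,
    add_neg_cancel]

theorem GP_eq_closedLoop_KP {P : Matrix (Fin n) (Fin n) ℝ} (hP : Pᵀ = P)
    (hR : IsUnit (g.RP P).det) : g.GP P = g.closedLoop (g.KP P) P := by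
  rw [g.GP_eq_closedLoop_sub hP hR (g.KP P), g.SP_add_RP_mul_KP hR, Matrix.mul_zero, sub_zero]

theorem NP_eq_SP_add_RP_mul_KP {P : Matrix (Fin n) (Fin n) ℝ} (hR : IsUnit (g.RP P).det)
    (Z : Matrix (Fin n) (Fin n) ℝ) :
    g.NP P Z = g.SP (P + Z) + g.RP (P + Z) * g.KP P := by
  have hlin : g.SP (P + Z) + g.RP (P + Z) * g.KP P = g.SP P + g.RP P * g.KP P + g.NP P Z := by
    simp only [NP_eq, SP_eq, RP_eq, CK_eq, Matrix.mul_add, Matrix.add_mul,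
      Finset.sum_add_distrib, Matrix.sum_mul, Matrix.mul_assoc]
    abel
  rw [hlin, g.SP_add_RP_mul_KP hR, zero_add]

theorem GP_add_of_innerRiccati {P Z : Matrix (Fin n) (Fin n) ℝ} (hP : Pᵀ = P) (hZ : Zᵀ = Z)
    (hRP : IsUnit (g.RP P).det) (hRPZ : IsUnit (g.RP (P + Z)).det) (hZeq : g.InnerRiccati P Z) :
    g.GP (P + Z) = (g.N2 P Z)ᵀ * (g.R22P (P + Z))⁻¹ * g.N2 P Z
      - (g.NP P Z)ᵀ * (g.RP (P + Z))⁻¹ * g.NP P Z := by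
  have hPZ : (P + Z)ᵀ = P + Z := by rw [transpose_add, hP, hZ]
  have hcl : g.closedLoop (g.KP P) (P + Z) = (g.N2 P Z)ᵀ * (g.R22P (P + Z))⁻¹ * g.N2 P Z := by
    rw [InnerRiccati, sub_eq_zero, g.GP_eq_closedLoop_KP hP hRP] at hZeq
    simpa only [closedLoop_add _ _ _ _ hZ, AK_eq, CK_eq] using hZeq
  rw [g.GP_eq_closedLoop_sub hPZ hRPZ (g.KP P), hcl, g.NP_eq_SP_add_RP_mul_KP hRP]

end GameData

theorem statement5_general {n m1 m2 r : ℕ} (g : GameData n m1 m2 r)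
    (P Z : Matrix (Fin n) (Fin n) ℝ) (hP : P.IsSymm) (hZ : Z.IsSymm)
    (hRP : IsUnit (g.RP P).det)
    (hR22 : IsUnit (g.R22P (P + Z)).det)
    (hSchur : IsUnit (g.R11P (P + Z)
      - g.R12P (P + Z) * (g.R22P (P + Z))⁻¹ * g.R21P (P + Z)).det)
    (hZeq : g.InnerRiccati P Z) :
    g.GP (P + Z) =
      -((g.N1 P Z - g.R12P (P + Z) * (g.R22P (P + Z))⁻¹ * g.N2 P Z)ᵀ
        * (g.R11P (P + Z) - g.R12P (P + Z) * (g.R22P (P + Z))⁻¹ * g.R21P (P + Z))⁻¹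
        * (g.N1 P Z - g.R12P (P + Z) * (g.R22P (P + Z))⁻¹ * g.N2 P Z)) := by
  have hPZ : (P + Z)ᵀ = P + Z := by rw [transpose_add, hP.eq, hZ.eq]
  have hRPZ : IsUnit (g.RP (P + Z)).det := isUnit_det_fromBlocks₂₂ hR22 hSchur
  have hN : (g.N1 P Z - g.R12P (P + Z) * (g.R22P (P + Z))⁻¹ * g.N2 P Z)ᵀ
      = (g.N1 P Z)ᵀ - (g.N2 P Z)ᵀ * (g.R22P (P + Z))⁻¹ * g.R21P (P + Z) := by
    rw [transpose_sub, transpose_mul, transpose_mul, transpose_nonsing_inv,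
      g.transpose_R22P hPZ, g.R21P_eq_transpose hPZ, Matrix.mul_assoc]
  rw [g.GP_add_of_innerRiccati hP.eq hZ.eq hRP hRPZ hZeq, GameData.NP, transpose_fromRows,
    GameData.RP, fromCols_mul_fromBlocks_inv_mul_fromRows hR22 hSchur, hN]
  abel

/-- if `Z` satisfies the inner Riccati equation at `P`, then `G(P+Z)` equals
minus the Schur-complement quadratic form of the correction terms. -/
theorem statement5 {n m1 m2 r : ℕ} (g : GameData n m1 m2 r)
    (P Z : Matrix (Fin n) (Fin n) ℝ) (hP : P.IsSymm) (hZ : Z.IsSymm)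
    (hRP : IsUnit (g.RP P).det) (hRPZ : IsUnit (g.RP (P + Z)).det)
    (hR22 : IsUnit (g.R22P (P + Z)).det)
    (hSchur : IsUnit (g.R11P (P + Z)
      - g.R12P (P + Z) * (g.R22P (P + Z))⁻¹ * g.R21P (P + Z)).det)
    (hZeq : g.InnerRiccati P Z) :
    g.GP (P + Z) =
      -((g.N1 P Z - g.R12P (P + Z) * (g.R22P (P + Z))⁻¹ * g.N2 P Z)ᵀ
        * (g.R11P (P + Z) - g.R12P (P + Z) * (g.R22P (P + Z))⁻¹ * g.R21P (P + Z))⁻¹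
        * (g.N1 P Z - g.R12P (P + Z) * (g.R22P (P + Z))⁻¹ * g.N2 P Z)) :=
  statement5_general g P Z hP hZ hRP hR22 hSchur hZeq
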